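/- Let T be a semistandard Young tableau and w = w(T) its row reading word. If m_i(w) > 0 and p is the smallest index r such that m_i(w,r) = m_i(w), then w_p = i. In particular, the Young lowering operator f_i, which changes the entry of T corresponding to w_p to i+1, is well-defined. -/

import Mathlib

/-! ## Reading words and the lowering operators on Mathlib's semistandard
Young tableaux.

Mathlib uses the English convention with rows indexed from the top starting at
`0`; the paper's row reading word (rows left to right, from the top row of the
French diagram to the bottom one) therefore reads the rows in order of
decreasing Mathlib row index. -/

/-- The cells of the Young diagram `μ` in reading order: rows left to right,
from the bottom row (in English convention) to the top one. -/
def readingCells (μ : YoungDiagram) : List (ℕ × ℕ) :=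
  ((List.range (μ.colLen 0)).reverse).flatMap (fun i =>
    (List.range (μ.rowLen i)).map (fun j => (i, j)))

/-- The row reading word of a semistandard Young tableau. -/
def rowWord {μ : YoungDiagram} (T : SemistandardYoungTableau μ) : List ℕ :=
  (readingCells μ).map (fun rc => T rc.1 rc.2)

/-- `mAt i w r` is `m_i(w, r)`: the number of `i`'s minus the number of
`(i+1)`'s among the first `r` letters of `w`. -/
def mAt (i : ℕ) (w : List ℕ) (r : ℕ) : ℤ :=
  ((w.take r).count i : ℤ) - ((w.take r).count (i + 1) : ℤ)

/-- `mMax i w` is `m_i(w) = max_{1 ≤ r ≤ |w|} m_i(w, r)` (with value `0` for the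
empty word). -/
noncomputable def mMax (i : ℕ) (w : List ℕ) : ℤ :=
  WithBot.unbotD 0 (((List.range w.length).map (fun r => mAt i w (r + 1))).maximum)

/-- The 0-based position in the reading word of a tableau used by the lowering
operator `f_i`: the smallest index at which `m_i` attains its maximum. -/
noncomputable def lowerIdx {μ : YoungDiagram} (i : ℕ) (T : SemistandardYoungTableau μ) : ℕ :=
  (List.range (rowWord T).length).findIdx
    (fun r => decide (mAt i (rowWord T) (r + 1) = mMax i (rowWord T)))

/-- The lowering operator `f_i` on (fillings of) semistandard Young tableaux:
`youngLowerFun i T = none` when `f_i(T) = 0` (i.e. `m_i(w(T)) ≤ 0`); otherwise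
the entry at the cell corresponding to the leftmost position attaining
`m_i(w(T))` is changed to `i + 1`. -/
noncomputable def youngLowerFun {μ : YoungDiagram} (i : ℕ) (T : SemistandardYoungTableau μ) :
    Option (ℕ → ℕ → ℕ) :=
  if mMax i (rowWord T) ≤ 0 then none
  else
    match (readingCells μ)[lowerIdx i T]? with
    | none => none
    | some q => some (fun a b => if (a, b) = q then i + 1 else T a b)

/-- The weight of a filling of `μ`: the number of cells with entry `k`. -/
def wtM (μ : YoungDiagram) (f : ℕ → ℕ → ℕ) (k : ℕ) : ℕ :=
  (μ.cells.filter (fun rc => f rc.1 rc.2 = k)).card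

/-! `m_i(w, ·)` starts at `m_i(w, 0) = 0` and moves by `+1`, `-1` or `0` at each letter, rising
exactly at the letters `i`. When its maximum over `r ≥ 1` is positive, the first position `p`
where that maximum is attained is preceded by a strictly smaller value, so the step into `p`
is a rise and the letter there is `i`. The corresponding cell of the tableau then exists and
holds `i`, so the lowering operator has a cell to act on. -/

/-- `lowerIdx i T` is `firstMaxIdx i (rowWord T)` by definition. -/
noncomputable def firstMaxIdx (i : ℕ) (w : List ℕ) : ℕ :=
  (List.range w.length).findIdx (fun r => decide (mAt i w (r + 1) = mMax i w))

@[simp]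
theorem mAt_zero (i : ℕ) (w : List ℕ) : mAt i w 0 = 0 := by
  simp [mAt]

section Word

variable {i : ℕ} {w : List ℕ}

theorem mAt_succ {r : ℕ} (hr : r < w.length) :
    mAt i w (r + 1) = mAt i w r
      + ((if w[r] = i then 1 else 0) - (if w[r] = i + 1 then 1 else 0)) := by
  unfold mAt
  rw [List.take_add_one, List.getElem?_eq_getElem hr]
  simp only [Option.toList_some, List.count_append, List.count_singleton']
  by_cases h1 : w[r] = i <;> by_cases h2 : w[r] = i + 1 <;> simp [h1, h2] <;> ring

theorem getElem_eq_of_mAt_lt_mAt_succ {r : ℕ} (hr : r < w.length)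
    (hlt : mAt i w r < mAt i w (r + 1)) : w[r] = i := by
  by_contra hne
  rw [mAt_succ hr, if_neg hne] at hlt
  split at hlt <;> omega

theorem mAt_succ_le_mMax {r : ℕ} (hr : r < w.length) : mAt i w (r + 1) ≤ mMax i w := by
  have hmem : mAt i w (r + 1) ∈ (List.range w.length).map (fun r => mAt i w (r + 1)) :=
    List.mem_map.mpr ⟨r, List.mem_range.mpr hr, rfl⟩
  rw [mMax]
  cases hmax : ((List.range w.length).map (fun r => mAt i w (r + 1))).maximum with
  | bot => simpa [hmax] using List.le_maximum_of_mem' hmem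
  | coe m => exact List.le_maximum_of_mem hmem hmax

theorem exists_mAt_succ_eq_mMax (hm : 0 < mMax i w) :
    ∃ r < w.length, mAt i w (r + 1) = mMax i w := by
  rw [mMax] at hm ⊢
  cases hmax : ((List.range w.length).map (fun r => mAt i w (r + 1))).maximum with
  | bot => simp [hmax] at hm
  | coe a =>
    obtain ⟨r, hr, he⟩ := List.mem_map.mp (List.maximum_mem hmax)
    exact ⟨r, List.mem_range.mp hr, by rw [WithBot.unbotD_coe]; exact he⟩

theorem firstMaxIdx_lt_length (hm : 0 < mMax i w) : firstMaxIdx i w < w.length := by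
  obtain ⟨r, hr, heq⟩ := exists_mAt_succ_eq_mMax hm
  simpa [firstMaxIdx] using List.findIdx_lt_length_of_exists
    (p := fun r => decide (mAt i w (r + 1) = mMax i w))
    ⟨r, List.mem_range.mpr hr, by simpa using heq⟩

theorem mAt_firstMaxIdx_succ (hm : 0 < mMax i w) :
    mAt i w (firstMaxIdx i w + 1) = mMax i w := by
  have hlt : firstMaxIdx i w < (List.range w.length).length := by
    simpa using firstMaxIdx_lt_length hm
  have h := List.findIdx_getElem (w := hlt)
  rw [decide_eq_true_eq] at h
  unfold firstMaxIdx
  convert h using 3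
  exact (List.getElem_range _).symm

theorem mAt_firstMaxIdx_lt_mMax (hm : 0 < mMax i w) :
    mAt i w (firstMaxIdx i w) < mMax i w := by
  have hlt := firstMaxIdx_lt_length hm
  cases hp : firstMaxIdx i w with
  | zero => simpa using hm
  | succ q =>
    have hq : q < (List.range w.length).findIdx
        (fun r => decide (mAt i w (r + 1) = mMax i w)) := by
      rw [← firstMaxIdx, hp]; omega
    have hne : mAt i w (q + 1) ≠ mMax i w := by
      simpa [List.getElem_range] using List.not_of_lt_findIdx hq
    exact lt_of_le_of_ne (mAt_succ_le_mMax (by omega)) hne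

theorem getElem_firstMaxIdx (hm : 0 < mMax i w) :
    w[firstMaxIdx i w]'(firstMaxIdx_lt_length hm) = i :=
  getElem_eq_of_mAt_lt_mAt_succ _ <|
    (mAt_firstMaxIdx_lt_mMax hm).trans_eq (mAt_firstMaxIdx_succ hm).symm

end Word

theorem length_rowWord {μ : YoungDiagram} (T : SemistandardYoungTableau μ) :
    (rowWord T).length = (readingCells μ).length :=
  List.length_map _

theorem mem_cells_of_mem_readingCells {μ : YoungDiagram} {c : ℕ × ℕ}
    (hc : c ∈ readingCells μ) : c ∈ μ.cells := by
  simp only [readingCells, List.mem_flatMap, List.mem_map, List.mem_range] at hc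
  obtain ⟨_, _, j, hj, rfl⟩ := hc
  exact μ.mem_iff_lt_rowLen.mpr hj

theorem young_lower_wellDefined_general (μ : YoungDiagram) (T : SemistandardYoungTableau μ)
    (i : ℕ) (hm : 0 < mMax i (rowWord T)) :
    lowerIdx i T < (rowWord T).length ∧
    (rowWord T).getD (lowerIdx i T) 0 = i ∧
    (readingCells μ).getD (lowerIdx i T) (0, 0) ∈ μ.cells ∧
    T ((readingCells μ).getD (lowerIdx i T) (0, 0)).1
      ((readingCells μ).getD (lowerIdx i T) (0, 0)).2 = i ∧
    youngLowerFun i T ≠ none := by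
  have hpw : lowerIdx i T < (rowWord T).length := firstMaxIdx_lt_length hm
  have hpc : lowerIdx i T < (readingCells μ).length := length_rowWord T ▸ hpw
  have hletter : (rowWord T)[lowerIdx i T] = i := getElem_firstMaxIdx hm
  have hentry : T (readingCells μ)[lowerIdx i T].1 (readingCells μ)[lowerIdx i T].2 = i := by
    simpa [rowWord] using hletter
  rw [List.getD_eq_getElem _ _ hpw, List.getD_eq_getElem _ _ hpc]
  refine ⟨hpw, hletter, mem_cells_of_mem_readingCells (List.getElem_mem hpc), hentry, ?_⟩
  rw [youngLowerFun, if_neg hm.not_ge, List.getElem?_eq_getElem hpc]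
  simp

/-- If `m_i(w(T)) > 0` and `p` is the smallest index `r` with
`m_i(w(T), r) = m_i(w(T))`, then `w_p = i`; in particular the lowering operator
`f_i`, which changes the entry of `T` corresponding to `w_p` to `i + 1`, is
well defined. -/
theorem young_lower_wellDefined (μ : YoungDiagram) (T : SemistandardYoungTableau μ)
    (hpos : ∀ rc ∈ μ.cells, 1 ≤ T rc.1 rc.2)
    (i : ℕ) (hi : 1 ≤ i) (hm : 0 < mMax i (rowWord T)) :
    lowerIdx i T < (rowWord T).length ∧
    (rowWord T).getD (lowerIdx i T) 0 = i ∧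
    (readingCells μ).getD (lowerIdx i T) (0, 0) ∈ μ.cells ∧
    T ((readingCells μ).getD (lowerIdx i T) (0, 0)).1
      ((readingCells μ).getD (lowerIdx i T) (0, 0)).2 = i ∧
    youngLowerFun i T ≠ none :=
  young_lower_wellDefined_general μ T i hm
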